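/- With f, W = f^ω(0), and g as above, the partial word g(W) contains no square of order ≥ 7: there are no j and n ≥ 7 with, for all i < n, g(W)[j+i] = g(W)[j+n+i] or g(W)[j+i] = ⋄ or g(W)[j+n+i] = ⋄. -/

import Mathlib

/-- The morphism f(0)=01, f(1)=23, f(2)=24, f(3)=51, f(4)=06, f(5)=01, f(6)=74, f(7)=24. -/
def fImg : ℕ → List ℕ
  | 0 => [0, 1]
  | 1 => [2, 3]
  | 2 => [2, 4]
  | 3 => [5, 1]
  | 4 => [0, 6]
  | 5 => [0, 1]
  | 6 => [7, 4]
  | _ => [2, 4]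

/-- The fixed point W = f^ω(0). -/
def W (n : ℕ) : ℕ := ((fun l => l.flatMap fImg)^[n+1] [0]).getD n 0

/-- The coding g(m) = m mod 2 for m ≠ 6, g(6) = ⋄, with the hole ⋄ encoded as 2. -/
def gW (n : ℕ) : ℕ := if W n = 6 then 2 else W n % 2

def FF (l : List ℕ) : List ℕ := l.flatMap fImg

lemma W_def (n : ℕ) : W n = (FF^[n+1] [0]).getD n 0 := rfl

lemma fImg_length (x : ℕ) : (fImg x).length = 2 := by
  rcases x with _|_|_|_|_|_|_|_|x <;> rfl

lemma FF_cons (a : ℕ) (l : List ℕ) : FF (a :: l) = fImg a ++ FF l := rfl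

lemma FF_append (l l' : List ℕ) : FF (l ++ l') = FF l ++ FF l' := by
  induction l with
  | nil => rfl
  | cons a t ih => simp [FF_cons, ih, List.append_assoc]

lemma FF_length (l : List ℕ) : (FF l).length = 2 * l.length := by
  induction l with
  | nil => rfl
  | cons a t ih => simp [FF_cons, ih, fImg_length]; ring

lemma FFiter_length (t : ℕ) (l : List ℕ) : (FF^[t] l).length = 2^t * l.length := by
  induction t generalizing l with
  | zero => simp
  | succ t ih =>
    rw [Function.iterate_succ_apply, ih, FF_length, pow_succ]
    ring

lemma FFiter_append (t : ℕ) (l l' : List ℕ) : FF^[t] (l ++ l') = FF^[t] l ++ FF^[t] l' := by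
  induction t generalizing l l' with
  | zero => simp
  | succ t ih => rw [Function.iterate_succ_apply, FF_append, ih,
      Function.iterate_succ_apply, Function.iterate_succ_apply]

lemma FF_getD : ∀ (l : List ℕ) (i c : ℕ), c < 2 → i < l.length →
    (FF l).getD (2*i+c) 0 = (fImg (l.getD i 0)).getD c 0 := by
  intro l
  induction l with
  | nil => intro i c _ h; simp at h
  | cons a t ih =>
    intro i c hc hi
    cases i with
    | zero =>
      simp only [FF_cons, List.getD_cons_zero]
      rw [List.getD_append _ _ _ _ (by rw [fImg_length]; omega)]
      norm_num
    | succ i =>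
      have h2 : 2*(i+1)+c = (fImg a).length + (2*i+c) := by rw [fImg_length]; omega
      rw [FF_cons, List.getD_cons_succ, h2, ← ih i c hc (by simpa using hi)]
      rw [List.getD_append_right _ _ _ _ (by omega)]
      congr 1
      omega

lemma FF_succ0 (t : ℕ) : FF^[t+1] [0] = FF^[t] [0] ++ FF^[t] [1] := by
  rw [Function.iterate_succ_apply]
  show FF^[t] ([0] ++ [1]) = _
  exact FFiter_append t [0] [1]

lemma W_stab : ∀ (d t n : ℕ), n < 2^t → (FF^[t+d] [0]).getD n 0 = (FF^[t] [0]).getD n 0 := by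
  intro d
  induction d with
  | zero => intro t n _; rfl
  | succ d ih =>
    intro t n hn
    have h1 : t + (d+1) = (t+d) + 1 := by omega
    rw [h1, FF_succ0, List.getD_append _ _ _ _ (by
      simp only [FFiter_length, List.length_cons, List.length_nil]
      have : 2^t ≤ 2^(t+d) := Nat.pow_le_pow_right (by norm_num) (by omega)
      omega)]
    exact ih t n hn

lemma W_eq (t n : ℕ) (hn : n < 2^t) : W n = (FF^[t] [0]).getD n 0 := by
  have hnn : n < 2^(n+1) := lt_of_lt_of_le (Nat.lt_two_pow_self (n := n)) (Nat.pow_le_pow_right (by norm_num) (by omega))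
  rcases le_total t (n+1) with h | h
  · obtain ⟨d, hd⟩ : ∃ d, n + 1 = t + d := ⟨n+1-t, by omega⟩
    rw [W_def, hd, W_stab d t n hn]
  · obtain ⟨d, hd⟩ : ∃ d, t = (n+1) + d := ⟨t-(n+1), by omega⟩
    rw [W_def, hd, W_stab d (n+1) n hnn]

lemma W_rec (q c : ℕ) (hc : c < 2) : W (2*q + c) = (fImg (W q)).getD c 0 := by
  have hq : q < 2^(q+1) := lt_of_lt_of_le (Nat.lt_two_pow_self (n := q)) (Nat.pow_le_pow_right (by norm_num) (by omega))
  have h2 : 2*q+c < 2^(q+2) := by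
    have : 2^(q+2) = 2*2^(q+1) := by ring
    omega
  rw [W_eq (q+2) _ h2]
  have : (q+2) = (q+1)+1 := rfl
  rw [this, Function.iterate_succ_apply', FF_getD _ q c hc (by rw [FFiter_length]; simpa using hq)]
  rw [← W_eq (q+1) q hq]

lemma W_exp : ∀ (t q c : ℕ), c < 2^(t+1) → W (2^t * q + c) = (FF^[t] [W q, W (q+1)]).getD c 0 := by
  intro t
  induction t with
  | zero =>
    intro q c hc
    interval_cases c
    · simp
    · show W (1*q+1) = _
      norm_num
  | succ t ih =>
    intro q c hc
    have hb : c % 2 < 2 := Nat.mod_lt _ (by norm_num)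
    have e2 : (2:ℕ)^(t+2) = 2*2^(t+1) := by ring
    have hd : c / 2 < 2^(t+1) := by omega
    have hpos : 2^(t+1) * q + c = 2*(2^t * q + c/2) + c % 2 := by
      have e : (2:ℕ)^(t+1) = 2*2^t := by ring
      rw [e, Nat.mul_assoc]; omega
    rw [hpos, W_rec _ _ hb, ih q (c/2) hd, Function.iterate_succ_apply']
    have hcc : c = 2*(c/2) + c % 2 := by omega
    conv_rhs => rw [hcc]
    rw [FF_getD _ _ _ hb (by
      simp only [FFiter_length, List.length_cons, List.length_nil]
      have e : (2:ℕ)^(t+1) = 2^t*2 := by ring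
      omega)]

def gc (a : ℕ) : ℕ := if a = 6 then 2 else a % 2

def hcl (a : ℕ) : ℕ := if a = 1 then 1 else if a = 4 then 3 else if a = 2 ∨ a = 6 ∨ a = 7 then 2 else 0

def cpt (a b : ℕ) : Bool := (a == b) || (a == 2) || (b == 2)

def Rrel (a b : ℕ) : Bool :=
  cpt (gc ((fImg a).getD 0 0)) (gc ((fImg b).getD 0 0)) &&
  cpt (gc ((fImg a).getD 1 0)) (gc ((fImg b).getD 1 0))

def pairs : List (ℕ × ℕ) :=
  [(0,1),(0,6),(1,2),(1,7),(2,3),(2,4),(3,2),(4,0),(4,5),(5,1),(6,0),(7,4)]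

lemma gW_gc (n : ℕ) : gW n = gc (W n) := rfl

lemma Pstep : ∀ p ∈ pairs,
    ((fImg p.1).getD 0 0, (fImg p.1).getD 1 0) ∈ pairs ∧
    ((fImg p.1).getD 1 0, (fImg p.2).getD 0 0) ∈ pairs := by decide

lemma pairs_mem : ∀ q : ℕ, (W q, W (q+1)) ∈ pairs := by
  intro q
  induction q using Nat.strong_induction_on with
  | _ q ih =>
    match q, ih with
    | 0, _ => decide
    | (q+1), ih =>
      obtain ⟨r, hr⟩ : ∃ r, q + 1 = 2*r ∨ q + 1 = 2*r + 1 := ⟨(q+1)/2, by omega⟩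
      have hmem := ih r (by omega)
      have hstep := Pstep _ hmem
      rcases hr with hr | hr
      · rw [hr]
        have e0 : W (2*r) = (fImg (W r)).getD 0 0 := by
          have := W_rec r 0 (by norm_num); simpa using this
        have e1 : W (2*r+1) = (fImg (W r)).getD 1 0 := W_rec r 1 (by norm_num)
        rw [e0, e1]
        exact hstep.1
      · rw [hr]
        have e1 : W (2*r+1) = (fImg (W r)).getD 1 0 := W_rec r 1 (by norm_num)
        have e2 : W (2*r+1+1) = (fImg (W (r+1))).getD 0 0 := by
          have := W_rec (r+1) 0 (by norm_num)
          have e : 2*(r+1) = 2*r+1+1 := by omega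
          rw [e] at this; simpa using this
        rw [e1, e2]
        exact hstep.2

lemma Plt : ∀ p ∈ pairs, p.1 < 8 ∧ p.2 < 8 := by decide

lemma W_lt (n : ℕ) : W n < 8 := (Plt _ (pairs_mem n)).1

lemma LPair : ∀ a < 8, ∀ b < 8,
    Rrel ((fImg a).getD 0 0) ((fImg b).getD 0 0) = true →
    Rrel ((fImg a).getD 1 0) ((fImg b).getD 1 0) = true → hcl a = hcl b := by decide

lemma LemF : ∀ p ∈ pairs, ∀ p' ∈ pairs,
    Rrel ((fImg p.1).getD 1 0) ((fImg p'.1).getD 1 0) = true →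
    hcl p.2 = hcl p'.2 → hcl p.1 = hcl p'.1 := by decide

lemma LemB : ∀ b < 8, ∀ c < 8,
    Rrel ((fImg b).getD 0 0) ((fImg c).getD 0 0) = true →
    cpt (gc ((fImg ((fImg b).getD 1 0)).getD 0 0)) (gc ((fImg ((fImg c).getD 1 0)).getD 0 0)) = true →
    hcl b = hcl c := by decide

lemma LemSnd : ∀ a < 8, ∀ b < 8,
    hcl ((fImg a).getD 1 0) = hcl ((fImg b).getD 1 0) → hcl a = hcl b := by decide

lemma D0 : ∀ p ∈ pairs, hcl p.1 ≠ hcl p.2 := by decide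

lemma prop_gpar : ∀ p ∈ pairs, ∀ p' ∈ pairs, ∀ r < 8, ∀ r' < 8, r % 2 ≠ r' % 2 →
    ∃ i < 7, cpt (gc ((FF^[3] [p.1, p.2]).getD (r+i) 0))
      (gc ((FF^[3] [p'.1, p'.2]).getD (r'+i) 0)) = false := by decide

lemma prop_rpar : ∀ p ∈ pairs, ∀ p' ∈ pairs, ∀ r < 8, ∀ r' < 8, r % 2 ≠ r' % 2 →
    ∃ i < 4, Rrel ((FF^[3] [p.1, p.2]).getD (r+i) 0)
      ((FF^[3] [p'.1, p'.2]).getD (r'+i) 0) = false := by decide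

lemma prop_vpar : ∀ p ∈ pairs, ∀ p' ∈ pairs, ∀ r < 4, ∀ r' < 4, r % 2 ≠ r' % 2 →
    ∃ i < 3, hcl ((FF^[2] [p.1, p.2]).getD (r+i) 0)
      ≠ hcl ((FF^[2] [p'.1, p'.2]).getD (r'+i) 0) := by decide

lemma W_win3 (x i : ℕ) (h : x % 8 + i < 16) :
    W (x+i) = (FF^[3] [W (x/8), W (x/8+1)]).getD (x % 8 + i) 0 := by
  have := W_exp 3 (x/8) (x % 8 + i) (by norm_num; omega)
  have e : 2^3 * (x/8) + (x % 8 + i) = x + i := by omega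
  rwa [e] at this

lemma W_win2 (x i : ℕ) (h : x % 4 + i < 8) :
    W (x+i) = (FF^[2] [W (x/4), W (x/4+1)]).getD (x % 4 + i) 0 := by
  have := W_exp 2 (x/4) (x % 4 + i) (by norm_num; omega)
  have e : 2^2 * (x/4) + (x % 4 + i) = x + i := by omega
  rwa [e] at this

lemma Gpar (x y : ℕ) (hp : x % 2 ≠ y % 2) :
    ∃ i < 7, cpt (gc (W (x+i))) (gc (W (y+i))) = false := by
  obtain ⟨i, hi, hf⟩ := prop_gpar _ (pairs_mem (x/8)) _ (pairs_mem (y/8))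
    (x % 8) (by omega) (y % 8) (by omega) (by omega)
  exact ⟨i, hi, by rw [W_win3 x i (by omega), W_win3 y i (by omega)]; exact hf⟩

lemma Rpar (x y : ℕ) (hp : x % 2 ≠ y % 2) :
    ∃ i < 4, Rrel (W (x+i)) (W (y+i)) = false := by
  obtain ⟨i, hi, hf⟩ := prop_rpar _ (pairs_mem (x/8)) _ (pairs_mem (y/8))
    (x % 8) (by omega) (y % 8) (by omega) (by omega)
  exact ⟨i, hi, by rw [W_win3 x i (by omega), W_win3 y i (by omega)]; exact hf⟩

lemma Vpar (x y : ℕ) (hp : x % 2 ≠ y % 2) :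
    ∃ i < 3, hcl (W (x+i)) ≠ hcl (W (y+i)) := by
  obtain ⟨i, hi, hf⟩ := prop_vpar _ (pairs_mem (x/4)) _ (pairs_mem (y/4))
    (x % 4) (by omega) (y % 4) (by omega) (by omega)
  exact ⟨i, hi, by rw [W_win2 x i (by omega), W_win2 y i (by omega)]; exact hf⟩

lemma Hpair (s s' : ℕ) (h0 : Rrel (W (2*s)) (W (2*s')) = true)
    (h1 : Rrel (W (2*s+1)) (W (2*s'+1)) = true) : hcl (W s) = hcl (W s') := by
  have e0 : W (2*s) = (fImg (W s)).getD 0 0 := by simpa using W_rec s 0 (by norm_num)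
  have e0' : W (2*s') = (fImg (W s')).getD 0 0 := by simpa using W_rec s' 0 (by norm_num)
  have e1 : W (2*s+1) = (fImg (W s)).getD 1 0 := W_rec s 1 (by norm_num)
  have e1' : W (2*s'+1) = (fImg (W s')).getD 1 0 := W_rec s' 1 (by norm_num)
  rw [e0, e0'] at h0; rw [e1, e1'] at h1
  exact LPair _ (W_lt s) _ (W_lt s') h0 h1

lemma HsndF (s s' : ℕ) (h1 : Rrel (W (2*s+1)) (W (2*s'+1)) = true)
    (h2 : hcl (W (s+1)) = hcl (W (s'+1))) : hcl (W s) = hcl (W s') := by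
  have e1 : W (2*s+1) = (fImg (W s)).getD 1 0 := W_rec s 1 (by norm_num)
  have e1' : W (2*s'+1) = (fImg (W s')).getD 1 0 := W_rec s' 1 (by norm_num)
  rw [e1, e1'] at h1
  exact LemF _ (pairs_mem s) _ (pairs_mem s') h1 h2

lemma HBw (s s' : ℕ) (h0 : Rrel (W (2*s)) (W (2*s')) = true)
    (h1 : cpt (gc (W (2*(2*s+1)))) (gc (W (2*(2*s'+1)))) = true) :
    hcl (W s) = hcl (W s') := by
  have e0 : W (2*s) = (fImg (W s)).getD 0 0 := by simpa using W_rec s 0 (by norm_num)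
  have e0' : W (2*s') = (fImg (W s')).getD 0 0 := by simpa using W_rec s' 0 (by norm_num)
  have e1 : W (2*(2*s+1)) = (fImg ((fImg (W s)).getD 1 0)).getD 0 0 := by
    have a1 := W_rec (2*s+1) 0 (by norm_num)
    have a2 : W (2*s+1) = (fImg (W s)).getD 1 0 := W_rec s 1 (by norm_num)
    simpa [a2] using a1
  have e1' : W (2*(2*s'+1)) = (fImg ((fImg (W s')).getD 1 0)).getD 0 0 := by
    have a1 := W_rec (2*s'+1) 0 (by norm_num)
    have a2 : W (2*s'+1) = (fImg (W s')).getD 1 0 := W_rec s' 1 (by norm_num)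
    simpa [a2] using a1
  rw [e0, e0'] at h0; rw [e1, e1'] at h1
  exact LemB _ (W_lt s) _ (W_lt s') h0 h1

lemma HSnd (s s' : ℕ) (h : hcl (W (2*s+1)) = hcl (W (2*s'+1))) : hcl (W s) = hcl (W s') := by
  have e1 : W (2*s+1) = (fImg (W s)).getD 1 0 := W_rec s 1 (by norm_num)
  have e1' : W (2*s'+1) = (fImg (W s')).getD 1 0 := W_rec s' 1 (by norm_num)
  rw [e1, e1'] at h
  exact LemSnd _ (W_lt s) _ (W_lt s') h

lemma Vfree : ∀ μ, 1 ≤ μ → ∀ κ, ¬ (∀ t, t < μ → hcl (W (κ+t)) = hcl (W (κ+μ+t))) := by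
  intro μ
  induction μ using Nat.strong_induction_on with
  | _ μ ih =>
    intro hμ κ hall
    rcases Nat.even_or_odd μ with ⟨ν, hν⟩ | ⟨ν, hν⟩
    · -- μ = 2ν
      have hν1 : 1 ≤ ν := by omega
      apply ih ν (by omega) hν1 (κ/2)
      intro u hu
      rcases Nat.even_or_odd κ with ⟨lam, hlam⟩ | ⟨lam, hlam⟩
      · have h := hall (2*u+1) (by omega)
        have p1 : κ + (2*u+1) = 2*(lam+u)+1 := by omega
        have p2 : κ + μ + (2*u+1) = 2*(lam+ν+u)+1 := by omega
        rw [p1, p2] at h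
        have h2 := HSnd _ _ h
        have q1 : κ/2 + u = lam + u := by omega
        have q2 : κ/2 + ν + u = lam + ν + u := by omega
        rw [q1, q2]
        exact h2
      · have h := hall (2*u) (by omega)
        have p1 : κ + 2*u = 2*(lam+u)+1 := by omega
        have p2 : κ + μ + 2*u = 2*(lam+ν+u)+1 := by omega
        rw [p1, p2] at h
        have h2 := HSnd _ _ h
        have q1 : κ/2 + u = lam + u := by omega
        have q2 : κ/2 + ν + u = lam + ν + u := by omega
        rw [q1, q2]
        exact h2
    · -- μ odd
      rcases Nat.lt_or_ge μ 3 with h3 | h3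
      · -- μ = 1
        have h1 : μ = 1 := by omega
        have h := hall 0 (by omega)
        rw [h1] at h
        have := D0 _ (pairs_mem κ)
        simp only at this
        apply this
        simpa using h
      · obtain ⟨i, hi, hne⟩ := Vpar κ (κ+μ) (by omega)
        exact hne (hall i (by omega))

lemma even_case (j m : ℕ) (hm : 4 ≤ m)
    (Hc : ∀ i, i < 2*m → cpt (gc (W (j+i))) (gc (W (j+2*m+i))) = true) : False := by
  obtain ⟨k, hk⟩ : ∃ k, j = 2*k ∨ j = 2*k+1 := ⟨j/2, by omega⟩
  have Rmid : ∀ i, 1 ≤ i → i < m → Rrel (W (k+i)) (W (k+m+i)) = true := by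
    intro i h1 hi
    have key : ∀ c, c < 2 → cpt (gc (W (2*(k+i)+c))) (gc (W (2*(k+m+i)+c))) = true := by
      intro c hc2
      rcases hk with hk | hk
      · have h := Hc (2*i+c) (by omega)
        have p1 : j + (2*i+c) = 2*(k+i)+c := by omega
        have p2 : j + 2*m + (2*i+c) = 2*(k+m+i)+c := by omega
        rwa [p1, p2] at h
      · have h := Hc (2*i+c-1) (by omega)
        have p1 : j + (2*i+c-1) = 2*(k+i)+c := by omega
        have p2 : j + 2*m + (2*i+c-1) = 2*(k+m+i)+c := by omega
        rwa [p1, p2] at h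
    simp only [Rrel, Bool.and_eq_true]
    constructor
    · rw [← W_rec (k+i) 0 (by norm_num), ← W_rec (k+m+i) 0 (by norm_num)]
      exact key 0 (by norm_num)
    · rw [← W_rec (k+i) 1 (by norm_num), ← W_rec (k+m+i) 1 (by norm_num)]
      exact key 1 (by norm_num)
  rcases Nat.even_or_odd m with ⟨μ, hμ2⟩ | ⟨μ, hμ2⟩
  · -- m = 2μ
    have hμ : m = 2*μ := by omega
    have hμ4 : 2 ≤ μ := by omega
    rcases Nat.even_or_odd k with ⟨κ, hκ2⟩ | ⟨κ, hκ2⟩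
    · -- k even
      have hκ : k = 2*κ := by omega
      have blocks : ∀ t, 1 ≤ t → t < μ → hcl (W (κ+t)) = hcl (W (κ+μ+t)) := by
        intro t h1 ht
        apply Hpair (κ+t) (κ+μ+t)
        · have h := Rmid (2*t) (by omega) (by omega)
          have p1 : k + 2*t = 2*(κ+t) := by omega
          have p2 : k+m+2*t = 2*(κ+μ+t) := by omega
          rwa [p1, p2] at h
        · have h := Rmid (2*t+1) (by omega) (by omega)
          have p1 : k + (2*t+1) = 2*(κ+t)+1 := by omega
          have p2 : k+m+(2*t+1) = 2*(κ+μ+t)+1 := by omega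
          rwa [p1, p2] at h
      have t0 : hcl (W κ) = hcl (W (κ+μ)) := by
        apply HsndF κ (κ+μ)
        · have h := Rmid 1 (by omega) (by omega)
          have p1 : k + 1 = 2*κ+1 := by omega
          have p2 : k+m+1 = 2*(κ+μ)+1 := by omega
          rwa [p1, p2] at h
        · have h := blocks 1 le_rfl (by omega)
          have p : κ + μ + 1 = (κ+μ) + 1 := by omega
          rwa [p] at h
      apply Vfree μ (by omega) κ
      intro t ht
      rcases Nat.eq_zero_or_pos t with h0 | h0
      · subst h0; simpa using t0
      · exact blocks t (by omega) ht
    · -- k odd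
      have hκ : k = 2*κ+1 := by omega
      have blocks2 : ∀ t, t < μ-1 → hcl (W (κ+1+t)) = hcl (W (κ+1+μ+t)) := by
        intro t ht
        apply Hpair (κ+1+t) (κ+1+μ+t)
        · have h := Rmid (2*t+1) (by omega) (by omega)
          have p1 : k + (2*t+1) = 2*(κ+1+t) := by omega
          have p2 : k+m+(2*t+1) = 2*(κ+1+μ+t) := by omega
          rwa [p1, p2] at h
        · have h := Rmid (2*t+2) (by omega) (by omega)
          have p1 : k + (2*t+2) = 2*(κ+1+t)+1 := by omega
          have p2 : k+m+(2*t+2) = 2*(κ+1+μ+t)+1 := by omega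
          rwa [p1, p2] at h
      rcases hk with hk | hk
      · -- j even : use R0 and LemF
        have R0 : Rrel (W k) (W (k+m)) = true := by
          have key : ∀ c, c < 2 → cpt (gc (W (2*k+c))) (gc (W (2*(k+m)+c))) = true := by
            intro c hc2
            have h := Hc c (by omega)
            have p1 : j + c = 2*k+c := by omega
            have p2 : j + 2*m + c = 2*(k+m)+c := by omega
            rwa [p1, p2] at h
          simp only [Rrel, Bool.and_eq_true]
          constructor
          · rw [← W_rec k 0 (by norm_num), ← W_rec (k+m) 0 (by norm_num)]
            exact key 0 (by norm_num)
          · rw [← W_rec k 1 (by norm_num), ← W_rec (k+m) 1 (by norm_num)]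
            exact key 1 (by norm_num)
        have t0 : hcl (W κ) = hcl (W (κ+μ)) := by
          apply HsndF κ (κ+μ)
          · have p2 : k+m = 2*(κ+μ)+1 := by omega
            have p1 : k = 2*κ+1 := hκ
            rwa [p2, p1] at R0
          · have h := blocks2 0 (by omega)
            have p1 : κ + 1 + 0 = κ + 1 := by omega
            have p2 : κ + 1 + μ + 0 = (κ+μ)+1 := by omega
            rwa [p1, p2] at h
        apply Vfree μ (by omega) κ
        intro t ht
        rcases Nat.eq_zero_or_pos t with h0 | h0
        · subst h0; simpa using t0
        · have h := blocks2 (t-1) (by omega)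
          have p1 : κ + 1 + (t-1) = κ + t := by omega
          have p2 : κ + 1 + μ + (t-1) = κ + μ + t := by omega
          rwa [p1, p2] at h
      · -- j odd : use LemB
        have Qf : Rrel (W (2*(κ+μ))) (W (2*(κ+2*μ))) = true := by
          have h := Rmid (m-1) (by omega) (by omega)
          have p1 : k + (m-1) = 2*(κ+μ) := by omega
          have p2 : k + m + (m-1) = 2*(κ+2*μ) := by omega
          rwa [p1, p2] at h
        have HRc : cpt (gc (W (2*(2*(κ+μ)+1)))) (gc (W (2*(2*(κ+2*μ)+1)))) = true := by
          have h := Hc (2*m-1) (by omega)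
          have p1 : j + (2*m-1) = 2*(2*(κ+μ)+1) := by omega
          have p2 : j + 2*m + (2*m-1) = 2*(2*(κ+2*μ)+1) := by omega
          rwa [p1, p2] at h
        have tν : hcl (W (κ+μ)) = hcl (W (κ+2*μ)) := HBw (κ+μ) (κ+2*μ) Qf HRc
        apply Vfree μ (by omega) (κ+1)
        intro t ht
        rcases Nat.lt_or_ge t (μ-1) with h0 | h0
        · have h := blocks2 t h0
          have p : κ + 1 + μ + t = (κ+1) + μ + t := by omega
          rwa [p] at h
        · have hteq : t = μ-1 := by omega
          subst hteq
          have p1 : κ + 1 + (μ-1) = κ + μ := by omega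
          have p2 : κ + 1 + μ + (μ-1) = κ + 2*μ := by omega
          rw [p1, p2]
          exact tν
  · -- m odd
    have hmo : m = 2*μ+1 := by omega
    obtain ⟨i, hi, hf⟩ := Rpar (k+1) (k+1+m) (by omega)
    have h := Rmid (1+i) (by omega) (by omega)
    have p1 : k + (1+i) = k+1+i := by omega
    have p2 : k + m + (1+i) = k+1+m+i := by omega
    rw [p1, p2] at h
    rw [h] at hf
    simp at hf

/-- g(W) avoids squares of order ≥ 7. -/
theorem stmt11 :
    ¬ ∃ j n : ℕ, 7 ≤ n ∧ ∀ i, i < n →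
      (gW (j+i) = gW (j+n+i) ∨ gW (j+i) = 2 ∨ gW (j+n+i) = 2) := by
  rintro ⟨j, n, hn, hsq⟩
  have Hc : ∀ i, i < n → cpt (gc (W (j+i))) (gc (W (j+n+i))) = true := by
    intro i hi
    rcases hsq i hi with h | h | h <;> simp only [gW_gc] at h <;> simp [cpt, h]
  rcases Nat.even_or_odd n with ⟨m, hm⟩ | ⟨m, hm⟩
  · apply even_case j m (by omega)
    intro i hi
    have h := Hc i (by omega)
    have e1 : j + n + i = j + 2*m + i := by omega
    rwa [e1] at h
  · obtain ⟨i, hi, hf⟩ := Gpar j (j+n) (by omega)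
    have h := Hc i (by omega)
    rw [h] at hf
    simp at hf
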